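/- Let Ω be a bounded convex open set, φ ∈ C¹(Ω) convex, u ∈ C(Ω), T x = Ax + b invertible affine, and define ũ(y) = u(T⁻¹ y), φ̃(y) = c[φ(T⁻¹y) − ℓ(T⁻¹y)] (ℓ affine, c > 0) on T(Ω). Then for every β > 0, G_β(ũ, T(Ω)) = T(G_{βc}(u, Ω)), where the G-sets are taken with respect to the quasi-distances of φ̃ and φ respectively. -/

import Mathlib

/-!
Both sides of the inequality defining `G_M(w, U)` at `x̄` are first-order Taylor remainders,
`dsq w · x̄` and `dsq ψ · x̄`. By the chain rule such a remainder is invariant under the affine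
change of variables `T x = A x + b`; it is unchanged by subtracting an affine function and is
multiplied by `c` when the function is. Hence the inequality for `(ũ, φ̃, β)` at `T x̄` is the one for
`(u, φ, β c)` at `x̄`.
-/

open scoped RealInnerProductSpace
open Bornology
noncomputable section

/-- `dsq ψ x x₀` is the paper's `d_ψ(x, x₀)²`. -/
def dsq {n : ℕ} (ψ : EuclideanSpace ℝ (Fin n) → ℝ)
    (x x₀ : EuclideanSpace ℝ (Fin n)) : ℝ :=
  ψ x - ψ x₀ - ⟪gradient ψ x₀, x - x₀⟫

/-- `Gset U ψ w M` is the paper's `G_M(w, U)`, taken with respect to `ψ`. -/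
def Gset {n : ℕ} (U : Set (EuclideanSpace ℝ (Fin n)))
    (ψ w : EuclideanSpace ℝ (Fin n) → ℝ) (M : ℝ) : Set (EuclideanSpace ℝ (Fin n)) :=
  {xb | xb ∈ U ∧ DifferentiableAt ℝ w xb ∧
    ∀ x ∈ U, |w x - w xb - ⟪gradient w xb, x - xb⟫| ≤ M * dsq ψ x xb}

section AffineChange

variable {𝕜 E F G : Type*} [NontriviallyNormedField 𝕜] [NormedAddCommGroup E] [NormedSpace 𝕜 E]
  [NormedAddCommGroup F] [NormedSpace 𝕜 F] [NormedAddCommGroup G] [NormedSpace 𝕜 G]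
  (A : E ≃L[𝕜] F) (b : F) {f : E → G}

theorem differentiableAt_comp_symm_sub_iff {y : F} :
    DifferentiableAt 𝕜 (fun y => f (A.symm (y - b))) y ↔ DifferentiableAt 𝕜 f (A.symm (y - b)) :=
  (differentiableAt_comp_sub (f := f ∘ A.symm) b).trans A.symm.comp_right_differentiableAt_iff

theorem fderiv_comp_symm_sub (y : F) :
    fderiv 𝕜 (fun y => f (A.symm (y - b))) y =
      (fderiv 𝕜 f (A.symm (y - b))).comp (A.symm : F →L[𝕜] E) :=
  (fderiv_comp_sub (f := f ∘ A.symm) b).trans A.symm.comp_right_fderiv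

end AffineChange

section Dsq

variable {n : ℕ}

theorem dsq_comp_symm_sub (f : EuclideanSpace ℝ (Fin n) → ℝ)
    (A : EuclideanSpace ℝ (Fin n) ≃L[ℝ] EuclideanSpace ℝ (Fin n))
    (b x x₀ : EuclideanSpace ℝ (Fin n)) :
    dsq (fun y => f (A.symm (y - b))) (A x + b) (A x₀ + b) = dsq f x x₀ := by
  simp [dsq, inner_gradient_left, fderiv_comp_symm_sub, ← map_sub]

theorem dsq_const_mul_sub_affine {f : EuclideanSpace ℝ (Fin n) → ℝ} {x₀ : EuclideanSpace ℝ (Fin n)}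
    (hf : DifferentiableAt ℝ f x₀) (c : ℝ) (p : EuclideanSpace ℝ (Fin n)) (r : ℝ)
    (x : EuclideanSpace ℝ (Fin n)) :
    dsq (fun x => c * (f x - (⟪p, x⟫ + r))) x x₀ = c * dsq f x x₀ := by
  have hderiv : HasFDerivAt (fun x => c * (f x - (⟪p, x⟫ + r)))
      (c • (fderiv ℝ f x₀ - innerSL ℝ p)) x₀ :=
    (hf.hasFDerivAt.sub ((innerSL ℝ p).hasFDerivAt.add_const r)).const_mul c
  simp only [dsq, inner_gradient_left, hderiv.fderiv]
  simp [inner_sub_right]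
  ring

theorem Gset_eq_setOf_abs_dsq_le (U : Set (EuclideanSpace ℝ (Fin n)))
    (ψ w : EuclideanSpace ℝ (Fin n) → ℝ) (M : ℝ) :
    Gset U ψ w M =
      {xb | xb ∈ U ∧ DifferentiableAt ℝ w xb ∧ ∀ x ∈ U, |dsq w x xb| ≤ M * dsq ψ x xb} :=
  rfl

theorem mem_Gset_image_affine_iff {U : Set (EuclideanSpace ℝ (Fin n))}
    {A : EuclideanSpace ℝ (Fin n) ≃L[ℝ] EuclideanSpace ℝ (Fin n)} {b x₀ : EuclideanSpace ℝ (Fin n)}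
    {ψ ψt : EuclideanSpace ℝ (Fin n) → ℝ} {c : ℝ}
    (hψt : ∀ x, dsq ψt (A x + b) (A x₀ + b) = c * dsq ψ x x₀)
    (w : EuclideanSpace ℝ (Fin n) → ℝ) (M : ℝ) :
    A x₀ + b ∈ Gset ((fun x => A x + b) '' U) ψt (fun y => w (A.symm (y - b))) M ↔
      x₀ ∈ Gset U ψ w (M * c) := by
  have hT : Function.Injective fun x => A x + b := fun x y h => A.injective (add_right_cancel h)
  simp only [Gset_eq_setOf_abs_dsq_le, Set.mem_ofPred_eq, Set.forall_mem_image, hT.mem_set_image,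
    differentiableAt_comp_symm_sub_iff, add_sub_cancel_right, A.symm_apply_apply, dsq_comp_symm_sub,
    hψt, mul_assoc]

theorem Gset_image_affine (U : Set (EuclideanSpace ℝ (Fin n)))
    (A : EuclideanSpace ℝ (Fin n) ≃L[ℝ] EuclideanSpace ℝ (Fin n)) (b : EuclideanSpace ℝ (Fin n))
    {ψ ψt : EuclideanSpace ℝ (Fin n) → ℝ} {c : ℝ}
    (hψt : ∀ x₀ ∈ U, ∀ x, dsq ψt (A x + b) (A x₀ + b) = c * dsq ψ x x₀)
    (w : EuclideanSpace ℝ (Fin n) → ℝ) (M : ℝ) :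
    Gset ((fun x => A x + b) '' U) ψt (fun y => w (A.symm (y - b))) M =
      (fun x => A x + b) '' Gset U ψ w (M * c) := by
  ext y
  constructor
  · intro hy
    obtain ⟨x₀, hx₀, rfl⟩ := hy.1
    exact ⟨x₀, (mem_Gset_image_affine_iff (hψt x₀ hx₀) w M).1 hy, rfl⟩
  · rintro ⟨x₀, hx₀, rfl⟩
    exact (mem_Gset_image_affine_iff (hψt x₀ hx₀.1) w M).2 hx₀

end Dsq

theorem stmt12_general {n : ℕ} (Ω : Set (EuclideanSpace ℝ (Fin n)))
    (φ : EuclideanSpace ℝ (Fin n) → ℝ)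
    (hφd : ∀ x ∈ Ω, DifferentiableAt ℝ φ x)
    (u : EuclideanSpace ℝ (Fin n) → ℝ)
    (A : EuclideanSpace ℝ (Fin n) ≃L[ℝ] EuclideanSpace ℝ (Fin n))
    (b : EuclideanSpace ℝ (Fin n)) (c : ℝ)
    (p : EuclideanSpace ℝ (Fin n)) (r : ℝ)
    (φt ut : EuclideanSpace ℝ (Fin n) → ℝ)
    (hφt : ∀ y, φt y = c * (φ (A.symm (y - b)) - (⟪p, A.symm (y - b)⟫ + r)))
    (hut : ∀ y, ut y = u (A.symm (y - b)))
    (β : ℝ) :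
    Gset ((fun x => A x + b) '' Ω) φt ut β = (fun x => A x + b) '' Gset Ω φ u (β * c) := by
  obtain rfl : ut = fun y => u (A.symm (y - b)) := funext hut
  obtain rfl : φt = fun y => (fun x => c * (φ x - (⟪p, x⟫ + r))) (A.symm (y - b)) := funext hφt
  refine Gset_image_affine Ω A b (fun x₀ hx₀ x => ?_) u β
  exact (dsq_comp_symm_sub _ A b x x₀).trans (dsq_const_mul_sub_affine (hφd x₀ hx₀) c p r x)

/-- covariance of the G-sets under affine change of variables:
G_β(ũ, T(Ω)) = T(G_{βc}(u, Ω)), where ũ = u ∘ T⁻¹ and φ̃ = c(φ − ℓ) ∘ T⁻¹. -/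
theorem stmt12 {n : ℕ} (Ω : Set (EuclideanSpace ℝ (Fin n)))
    (hΩconv : Convex ℝ Ω) (hΩbdd : IsBounded Ω) (hΩopen : IsOpen Ω)
    (φ : EuclideanSpace ℝ (Fin n) → ℝ) (hφ : ConvexOn ℝ Ω φ)
    (hφd : ∀ x ∈ Ω, DifferentiableAt ℝ φ x)
    (u : EuclideanSpace ℝ (Fin n) → ℝ) (hu : ContinuousOn u Ω)
    (A : EuclideanSpace ℝ (Fin n) ≃L[ℝ] EuclideanSpace ℝ (Fin n))
    (b : EuclideanSpace ℝ (Fin n)) (c : ℝ) (hc : 0 < c)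
    (p : EuclideanSpace ℝ (Fin n)) (r : ℝ)
    (φt ut : EuclideanSpace ℝ (Fin n) → ℝ)
    (hφt : ∀ y, φt y = c * (φ (A.symm (y - b)) - (⟪p, A.symm (y - b)⟫ + r)))
    (hut : ∀ y, ut y = u (A.symm (y - b)))
    (β : ℝ) (hβ : 0 < β) :
    Gset ((fun x => A x + b) '' Ω) φt ut β = (fun x => A x + b) '' Gset Ω φ u (β * c) :=
  stmt12_general Ω φ hφd u A b c p r φt ut hφt hut β
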